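/- arXiv:0903.4533 — 5 statements merged into one kernel-verified Lean document; each statement's English description precedes it below -/
import Mathlib

section
/- Let G be a group, C a central subgroup of G, and φ an automorphism of G. Two elements c₁, c₂ ∈ C are φ-twisted conjugate in G if and only if c₁⁻¹·c₂ ∈ L(C,φ), where L(C,φ) = { c ∈ C | ∃ x ∈ G, φ(x) = c·x }. -/
/-- Let `G` be a group, `C` a central subgroup of `G`, `φ` an automorphism of
`G`, and `c₁ c₂ ∈ C`. Then `c₁` and `c₂` are `φ`-twisted conjugate in `G`
(`∃ x, φ x * c₁ = c₂ * x`) iff `c₁⁻¹ * c₂ ∈ L(C,φ) = { c ∈ C | ∃ x, φ x = c * x }`. -/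
theorem central_twisted_conjugate_iff {G : Type*} [Group G] (C : Subgroup G)
    (hC : C ≤ Subgroup.center G) (φ : G ≃* G) (c₁ c₂ : G)
    (h₁ : c₁ ∈ C) (h₂ : c₂ ∈ C) :
    (∃ x : G, φ x * c₁ = c₂ * x) ↔
      c₁⁻¹ * c₂ ∈ {c : G | c ∈ C ∧ ∃ x : G, φ x = c * x} := by
  have hc1 := Subgroup.mem_center_iff.mp (hC h₁)
  constructor
  · rintro ⟨x, hx⟩
    refine ⟨mul_mem (inv_mem h₁) h₂, x, ?_⟩
    have : φ x = c₂ * x * c₁⁻¹ := by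
      rw [← hx]; group
    have hci := Subgroup.mem_center_iff.mp (hC (inv_mem h₁))
    rw [this, hci]
    group
  · rintro ⟨-, x, hx⟩
    refine ⟨x, ?_⟩
    rw [hx, hc1]
    group
end

section
/- For every r ≥ 2 and every k ∈ ℕ with k ≥ 1, there exists a matrix M ∈ GL_r(ℤ) with |det(M − E)| = k. -/
/-!
For `M = A ⊕ D` block diagonal, `det M = det A * det D` and `det (M - 1) = det (A - 1) * det (D - 1)`,
so the realizable values of `|det (M - 1)|` are closed under multiplication when the dimensions add.
The companion matrices of `x² + kx - 1` and `x³ + kx - 1` lie in `GL_2(ℤ)` and `GL_3(ℤ)` and realize `k`,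
since these polynomials take the value `-1` at `0` and `k` at `1`. Adding 2×2 blocks realizing `1`
reaches every dimension `r ≥ 2`.
-/

open Matrix

theorem Matrix.fromBlocks_sub_one {R m n : Type*} [Ring R] [DecidableEq m] [DecidableEq n]
    (A : Matrix m m R) (B : Matrix m n R) (C : Matrix n m R) (D : Matrix n n R) :
    fromBlocks A B C D - 1 = fromBlocks (A - 1) B C (D - 1) := by
  rw [← fromBlocks_one, sub_eq_add_neg, fromBlocks_neg, fromBlocks_add]
  simp [sub_eq_add_neg]

theorem Matrix.det_reindex_sub_one {R m n : Type*} [CommRing R] [Fintype m] [Fintype n]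
    [DecidableEq m] [DecidableEq n] (e : m ≃ n) (A : Matrix m m R) :
    (reindex e e A - 1).det = (A - 1).det := by
  rw [← det_reindex_self e (A - 1)]
  simp [reindex_apply, submatrix_sub, submatrix_one_equiv]

/-- Its nonzero elements are the finite Reidemeister numbers of automorphisms of `ℤ^r`. -/
def detSubOneValues (r : ℕ) : Set ℕ :=
  {k | ∃ M : Matrix (Fin r) (Fin r) ℤ, IsUnit M.det ∧ ((M - 1).det).natAbs = k}

theorem mul_mem_detSubOneValues_add {m n k l : ℕ} (hk : k ∈ detSubOneValues m)
    (hl : l ∈ detSubOneValues n) : k * l ∈ detSubOneValues (m + n) := by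
  obtain ⟨A, hA, rfl⟩ := hk
  obtain ⟨D, hD, rfl⟩ := hl
  refine ⟨reindex finSumFinEquiv finSumFinEquiv (fromBlocks A 0 0 D), ?_, ?_⟩
  · rw [det_reindex_self, det_fromBlocks_zero₂₁]
    exact hA.mul hD
  · rw [det_reindex_sub_one, fromBlocks_sub_one, det_fromBlocks_zero₂₁, Int.natAbs_mul]

theorem mem_detSubOneValues_two (k : ℕ) : k ∈ detSubOneValues 2 :=
  ⟨!![0, 1; 1, -(k : ℤ)], by simp [det_fin_two], by simp [det_fin_two]⟩

theorem mem_detSubOneValues_three (k : ℕ) : k ∈ detSubOneValues 3 :=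
  ⟨!![0, 0, 1; 1, 0, -(k : ℤ); 0, 1, 0], by simp [det_fin_three],
    by simp [det_fin_three, sub_add_eq_add_sub]⟩

theorem exists_GLr_det_sub_one_general (r k : ℕ) (hr : 2 ≤ r) :
    ∃ M : Matrix (Fin r) (Fin r) ℤ, IsUnit M.det ∧ ((M - 1).det).natAbs = k := by
  obtain ⟨n, rfl⟩ := Nat.exists_eq_add_of_le' hr
  clear hr
  show k ∈ detSubOneValues (n + 2)
  induction n using Nat.twoStepInduction with
  | zero => exact mem_detSubOneValues_two k
  | one => exact mem_detSubOneValues_three k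
  | more n ih _ => simpa using mul_mem_detSubOneValues_add ih (mem_detSubOneValues_two 1)

/-- For every `r ≥ 2` and every `k ≥ 1` there exists a matrix `M ∈ GL_r(ℤ)`
with `|det (M - E)| = k`. -/
theorem exists_GLr_det_sub_one (r k : ℕ) (hr : 2 ≤ r) (hk : 1 ≤ k) :
    ∃ M : Matrix (Fin r) (Fin r) ℤ, IsUnit M.det ∧ ((M - 1).det).natAbs = k :=
  exists_GLr_det_sub_one_general r k hr
end

section
/- The Reidemeister spectrum of the free abelian group ℤ^r for r ≥ 2 is ℕ_{≥1} ∪ {∞}: every positive integer and ∞ occur as Reidemeister numbers of automorphisms of ℤ^r. -/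
open Classical

/-- The Reidemeister number of an automorphism `φ` of an additive group `A`:
the number of `φ`-twisted conjugacy classes, as an element of `ℕ∞`
(`⊤` when there are infinitely many classes). -/
noncomputable def addReidemeisterNumber {A : Type*} [AddGroup A] (φ : A ≃+ A) : ℕ∞ :=
  if Finite (Quot fun a b : A => ∃ x : A, φ x + a = b + x) then
    (Nat.card (Quot fun a b : A => ∃ x : A, φ x + a = b + x) : ℕ∞)
  else ⊤

/-- Auxiliary automorphism candidate on `ℤ^(k+2)`: `x ↦ x + N x` where `N` is the
companion-type matrix with columns `e₁, e₂, …, e_{k+1}, n e₀ + n e₁`. -/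
def phiFun (k n : ℕ) (x : Fin (k + 2) → ℤ) : Fin (k + 2) → ℤ := fun j =>
  if j.val = 0 then x j + n * x ⟨k + 1, by omega⟩
  else if j.val = 1 then x j + x ⟨0, by omega⟩ + n * x ⟨k + 1, by omega⟩
  else x j + x ⟨j.val - 1, by omega⟩

lemma phiFun_apply_zero (k n : ℕ) (x : Fin (k + 2) → ℤ) (h : 0 < k + 2) :
    phiFun k n x ⟨0, h⟩ = x ⟨0, h⟩ + n * x ⟨k + 1, by omega⟩ := rfl

lemma phiFun_apply_one (k n : ℕ) (x : Fin (k + 2) → ℤ) (h : 1 < k + 2) :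
    phiFun k n x ⟨1, h⟩ = x ⟨1, h⟩ + x ⟨0, by omega⟩ + n * x ⟨k + 1, by omega⟩ := rfl

lemma phiFun_apply_two (k n : ℕ) (x : Fin (k + 2) → ℤ) (m : ℕ) (h : m + 2 < k + 2) :
    phiFun k n x ⟨m + 2, h⟩ = x ⟨m + 2, h⟩ + x ⟨m + 1, by omega⟩ := rfl

def phiHom (k n : ℕ) : (Fin (k + 2) → ℤ) →+ (Fin (k + 2) → ℤ) where
  toFun := phiFun k n
  map_zero' := by
    funext j
    simp only [phiFun, Pi.zero_apply]
    split_ifs <;> ring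
  map_add' x y := by
    funext j
    simp only [phiFun, Pi.add_apply]
    split_ifs <;> ring

lemma phiFun_injective (k n : ℕ) : Function.Injective (phiFun k n) := by
  have key0 : ∀ x, phiFun k n x = 0 → x = 0 := by
    intro x hx
    have h0 : x ⟨0, by omega⟩ + n * x ⟨k + 1, by omega⟩ = 0 := by
      have := congrFun hx ⟨0, by omega⟩
      rw [phiFun_apply_zero] at this
      exact this
    have h1 : x ⟨1, by omega⟩ + x ⟨0, by omega⟩ + n * x ⟨k + 1, by omega⟩ = 0 := by
      have := congrFun hx ⟨1, by omega⟩
      rw [phiFun_apply_one] at this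
      exact this
    have key : ∀ m, ∀ hm : m + 1 < k + 2, x ⟨m + 1, hm⟩ = 0 := by
      intro m
      induction m with
      | zero => intro hm; linarith
      | succ p ih =>
        intro hm
        have hp := ih (by omega)
        have h2 : x ⟨p + 2, hm⟩ + x ⟨p + 1, by omega⟩ = 0 := by
          have := congrFun hx ⟨p + 2, hm⟩
          rw [phiFun_apply_two] at this
          exact this
        linarith
    have hlast : x ⟨k + 1, by omega⟩ = 0 := key k (by omega)
    have hz : x ⟨0, by omega⟩ = 0 := by linear_combination h0 - (n : ℤ) * hlast
    funext j
    rcases j with ⟨jv, hj⟩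
    match jv, hj with
    | 0, hj => exact hz
    | (m + 1), hj => exact key m hj
  intro a b hab
  have := key0 (a - b) (by rw [show phiFun k n (a - b) = phiFun k n a - phiFun k n b from
    map_sub (phiHom k n) a b, hab, sub_self])
  exact sub_eq_zero.mp this

/-- Recursive solution sequence for surjectivity. -/
def gAux (Y : ℕ → ℤ) : ℕ → ℤ
  | 0 => Y 0
  | p + 1 => Y (p + 1) - gAux Y p

lemma phiFun_surjective (k n : ℕ) : Function.Surjective (phiFun k n) := by
  intro y
  set Y : ℕ → ℤ := fun m => if h : m < k + 2 then y ⟨m, h⟩ else 0 with hY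
  refine ⟨fun i => if i.val = 0 then Y 0 - n * gAux Y (k + 1) else gAux Y i.val, ?_⟩
  funext j
  rcases j with ⟨jv, hj⟩
  match jv, hj with
  | 0, hj =>
    rw [phiFun_apply_zero]
    show Y 0 - n * gAux Y (k + 1) + n * gAux Y (k + 1) = y ⟨0, hj⟩
    have hy0 : Y 0 = y ⟨0, hj⟩ := by simp only [hY]; rw [dif_pos]
    rw [← hy0]; ring
  | 1, hj =>
    rw [phiFun_apply_one]
    show gAux Y 1 + (Y 0 - n * gAux Y (k + 1)) + n * gAux Y (k + 1) = y ⟨1, hj⟩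
    have hg : gAux Y 1 = Y 1 - Y 0 := rfl
    have hy1 : Y 1 = y ⟨1, hj⟩ := by simp only [hY]; rw [dif_pos]
    rw [hg, ← hy1]; ring
  | (m + 2), hj =>
    rw [phiFun_apply_two]
    show gAux Y (m + 2) + gAux Y (m + 1) = y ⟨m + 2, hj⟩
    have hg : gAux Y (m + 2) = Y (m + 2) - gAux Y (m + 1) := rfl
    have hy2 : Y (m + 2) = y ⟨m + 2, hj⟩ := by simp only [hY]; rw [dif_pos]
    rw [hg, ← hy2]; ring

noncomputable def phiEquiv (k n : ℕ) : (Fin (k + 2) → ℤ) ≃+ (Fin (k + 2) → ℤ) :=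
  AddEquiv.ofBijective (phiHom k n) ⟨phiFun_injective k n, phiFun_surjective k n⟩

lemma phiEquiv_apply (k n : ℕ) (x : Fin (k + 2) → ℤ) :
    phiEquiv k n x = phiFun k n x := rfl

/-- `(φ x - x) 0` is `n` times something. -/
lemma phiFun_sub_zero (k n : ℕ) (x : Fin (k + 2) → ℤ) (h : 0 < k + 2) :
    (phiFun k n x - x) ⟨0, h⟩ = n * x ⟨k + 1, by omega⟩ := by
  show phiFun k n x ⟨0, h⟩ - x ⟨0, h⟩ = n * x ⟨k + 1, by omega⟩
  rw [phiFun_apply_zero]; ring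

/-- The solution candidate for `φ x - x = v`. -/
def solAux (k : ℕ) (c : ℤ) (v : Fin (k + 2) → ℤ) : Fin (k + 2) → ℤ := fun i =>
  if i.val = k + 1 then c
  else if i.val = 0 then v ⟨1, by omega⟩ - v ⟨0, by omega⟩
  else if h : i.val + 1 < k + 2 then v ⟨i.val + 1, h⟩ else 0

lemma solAux_zero (k : ℕ) (c : ℤ) (v : Fin (k + 2) → ℤ) (h : 0 < k + 2) :
    solAux k c v ⟨0, h⟩ = v ⟨1, by omega⟩ - v ⟨0, by omega⟩ := rfl

lemma solAux_last (k : ℕ) (c : ℤ) (v : Fin (k + 2) → ℤ) (h : k + 1 < k + 2) :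
    solAux k c v ⟨k + 1, h⟩ = c := by
  simp [solAux]

lemma solAux_mid (k : ℕ) (c : ℤ) (v : Fin (k + 2) → ℤ) (m : ℕ) (h : m + 1 < k + 2)
    (hne : m + 1 ≠ k + 1) : solAux k c v ⟨m + 1, h⟩ = v ⟨m + 2, by omega⟩ := by
  simp only [solAux]
  rw [if_neg (by simpa using hne), if_neg (by omega), dif_pos (by omega)]

/-- Conversely, anything whose `0`-coordinate is divisible by `n` is of the form
`φ x - x`. -/
lemma phiFun_sub_surj (k n : ℕ) (v : Fin (k + 2) → ℤ)
    (hv : (n : ℤ) ∣ v ⟨0, by omega⟩) : ∃ x, phiFun k n x - x = v := by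
  obtain ⟨c, hc⟩ := hv
  refine ⟨solAux k c v, ?_⟩
  funext j
  rcases j with ⟨jv, hj⟩
  match jv, hj with
  | 0, hj =>
    show phiFun k n (solAux k c v) ⟨0, hj⟩ - solAux k c v ⟨0, hj⟩ = v ⟨0, hj⟩
    rw [phiFun_apply_zero, solAux_last, hc]
    ring
  | 1, hj =>
    show phiFun k n (solAux k c v) ⟨1, hj⟩ - solAux k c v ⟨1, hj⟩ = v ⟨1, hj⟩
    rw [phiFun_apply_one, solAux_last, solAux_zero, hc]
    ring
  | (m + 2), hj =>
    show phiFun k n (solAux k c v) ⟨m + 2, hj⟩ - solAux k c v ⟨m + 2, hj⟩ = v ⟨m + 2, hj⟩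
    rw [phiFun_apply_two, solAux_mid k c v m (by omega) (by omega)]
    ring

/-- The Reidemeister spectrum of the free abelian group `ℤ^r` for `r ≥ 2` is
`ℕ_{≥1} ∪ {∞}`, i.e. the set of all nonzero elements of `ℕ∞`: every positive
integer and `∞` occur as Reidemeister numbers of automorphisms of `ℤ^r`. -/
theorem reidemeister_spectrum_free_abelian (r : ℕ) (hr : 2 ≤ r) :
    {x : ℕ∞ | ∃ φ : (Fin r → ℤ) ≃+ (Fin r → ℤ), addReidemeisterNumber φ = x} =
      {x : ℕ∞ | x ≠ 0} := by
  obtain ⟨k, rfl⟩ : ∃ k, r = k + 2 := ⟨r - 2, by omega⟩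
  ext x
  simp only [Set.mem_setOf_eq]
  constructor
  · rintro ⟨φ, rfl⟩
    unfold addReidemeisterNumber
    split_ifs with h
    · have hne : Nonempty (Quot fun a b : (Fin (k + 2) → ℤ) => ∃ x, φ x + a = b + x) :=
        ⟨Quot.mk _ 0⟩
      simp only [ne_eq, Nat.cast_eq_zero]
      exact Nat.card_ne_zero.mpr ⟨hne, h⟩
    · simp
  · intro hx
    induction x using ENat.recTopCoe with
    | top =>
      refine ⟨AddEquiv.refl _, ?_⟩
      unfold addReidemeisterNumber
      rw [if_neg]
      intro hF
      have hEq : ∀ a b : Fin (k + 2) → ℤ,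
          Relation.EqvGen (fun a b : (Fin (k + 2) → ℤ) =>
            ∃ x, (AddEquiv.refl (Fin (k + 2) → ℤ)) x + a = b + x) a b → a = b := by
        intro a b h
        induction h with
        | rel a b hab =>
          obtain ⟨x, hx⟩ := hab
          simp only [AddEquiv.refl_apply] at hx
          rw [add_comm b x] at hx
          exact add_left_cancel hx
        | refl a => rfl
        | symm a b _ ih => exact ih.symm
        | trans a b c _ _ ih1 ih2 => exact ih1.trans ih2
      have hinj : Function.Injective
          (Quot.mk fun a b : (Fin (k + 2) → ℤ) =>
            ∃ x, (AddEquiv.refl (Fin (k + 2) → ℤ)) x + a = b + x) := by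
        intro a b hab
        exact hEq a b (Quot.eq.mp hab)
      haveI : Infinite (Fin (k + 2) → ℤ) := by
        refine Infinite.of_injective (fun z : ℤ => fun _ => z) ?_
        intro a b hab
        exact congrFun hab ⟨0, by omega⟩
      haveI := Infinite.of_injective _ hinj
      haveI := hF
      exact not_finite (Quot fun a b : (Fin (k + 2) → ℤ) =>
        ∃ x, (AddEquiv.refl (Fin (k + 2) → ℤ)) x + a = b + x)
    | coe n =>
      have hn : n ≠ 0 := by simpa using hx
      haveI : NeZero n := ⟨hn⟩
      refine ⟨phiEquiv k n, ?_⟩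
      have key : ∀ a b : Fin (k + 2) → ℤ,
          (∃ x, phiEquiv k n x + a = b + x) ↔
            (((b ⟨0, by omega⟩ - a ⟨0, by omega⟩ : ℤ) : ZMod n) = 0) := by
        intro a b
        constructor
        · rintro ⟨x, hxx⟩
          have hsub : phiFun k n x - x = b - a := by
            funext i
            have := congrFun hxx i
            rw [phiEquiv_apply] at this
            simp only [Pi.add_apply, Pi.sub_apply] at this ⊢
            linarith
          have h2 := congrFun hsub ⟨0, by omega⟩
          rw [phiFun_sub_zero] at h2
          simp only [Pi.sub_apply] at h2
          rw [← h2]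
          push_cast
          simp
        · intro hq
          have hdvd : (n : ℤ) ∣ b ⟨0, by omega⟩ - a ⟨0, by omega⟩ := by
            rw [← ZMod.intCast_zmod_eq_zero_iff_dvd]
            exact_mod_cast hq
          have hdvd' : (n : ℤ) ∣ (b - a) ⟨0, by omega⟩ := by
            simpa using hdvd
          obtain ⟨x, hxv⟩ := phiFun_sub_surj k n (b - a) hdvd'
          refine ⟨x, ?_⟩
          funext i
          have := congrFun hxv i
          rw [phiEquiv_apply]
          simp only [Pi.sub_apply, Pi.add_apply] at this ⊢
          linarith
      have hsound : ∀ a b : Fin (k + 2) → ℤ, (∃ x, phiEquiv k n x + a = b + x) →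
          ((a ⟨0, by omega⟩ : ℤ) : ZMod n) = ((b ⟨0, by omega⟩ : ℤ) : ZMod n) := by
        intro a b hab
        have h1 := (key a b).mp hab
        push_cast at h1
        linear_combination -h1
      let F : (Quot fun a b : (Fin (k + 2) → ℤ) => ∃ x, phiEquiv k n x + a = b + x) →
          ZMod n := Quot.lift (fun a => ((a ⟨0, by omega⟩ : ℤ) : ZMod n)) hsound
      have hFbij : Function.Bijective F := by
        constructor
        · intro u v
          induction u using Quot.ind with | _ a =>
          induction v using Quot.ind with | _ b =>
          intro hab
          apply Quot.sound
          apply (key a b).mpr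
          have h1 : ((a ⟨0, by omega⟩ : ℤ) : ZMod n) = ((b ⟨0, by omega⟩ : ℤ) : ZMod n) := hab
          push_cast
          linear_combination -h1
        · intro z
          obtain ⟨m, hm⟩ := ZMod.intCast_surjective (n := n) z
          exact ⟨Quot.mk _ (fun _ => m), hm⟩
      have e : (Quot fun a b : (Fin (k + 2) → ℤ) => ∃ x, phiEquiv k n x + a = b + x) ≃
          ZMod n := Equiv.ofBijective F hFbij
      haveI hfin : Finite (Quot fun a b : (Fin (k + 2) → ℤ) =>
          ∃ x, phiEquiv k n x + a = b + x) := Finite.of_equiv _ e.symm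
      unfold addReidemeisterNumber
      rw [if_pos hfin, Nat.card_congr e, Nat.card_zmod]
end

section
/- Let A be a 3×3 integer matrix with det A = ±1 and B the associated minor matrix with det B = 1 as above. Then det(A−E) and det(B−E) have the same parity; consequently their product det(A−E)·det(B−E) is never congruent to 2 modulo 4. -/
/-- The `(i,j)` minor of a `3×3` matrix: the determinant of the `2×2` matrix
obtained by deleting row `i` and column `j`. -/
def minor3 (A : Matrix (Fin 3) (Fin 3) ℤ) (i j : Fin 3) : ℤ :=
  (A.submatrix i.succAbove j.succAbove).det

/-- The associated matrix of minors `B = [[M₃₃,M₃₂,M₃₁],[M₂₃,M₂₂,M₂₁],[M₁₃,M₁₂,M₁₁]]`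
(indices here are 0-based: `M₃₃ = minor3 A 2 2`, etc.). -/
def minorMatrix (A : Matrix (Fin 3) (Fin 3) ℤ) : Matrix (Fin 3) (Fin 3) ℤ :=
  !![minor3 A 2 2, minor3 A 2 1, minor3 A 2 0;
     minor3 A 1 2, minor3 A 1 1, minor3 A 1 0;
     minor3 A 0 2, minor3 A 0 1, minor3 A 0 0]

/-- Let `A ∈ GL₃(ℤ)` (so `det A = ±1`) and `B` its associated matrix of
minors. Then `det (A - E)` and `det (B - E)` have the same parity, and
consequently their product is never congruent to `2` modulo `4`. -/
theorem minor_matrix_parity (A : Matrix (Fin 3) (Fin 3) ℤ)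
    (hA : A.det = 1 ∨ A.det = -1) :
    (A - 1).det % 2 = (minorMatrix A - 1).det % 2 ∧
      ((A - 1).det * (minorMatrix A - 1).det) % 4 ≠ 2 := by
  set a := A 0 0 with ha
  set b := A 0 1 with hb
  set c := A 0 2 with hc
  set d := A 1 0 with hd
  set e := A 1 1 with he
  set f := A 1 2 with hf
  set g := A 2 0 with hg
  set h := A 2 1 with hh
  set i := A 2 2 with hi
  have hD1 : (A - 1).det =
      (a-1)*((e-1)*(i-1)-f*h) - b*(d*(i-1)-f*g) + c*(d*h-(e-1)*g) := by
    simp [Matrix.det_fin_three, Matrix.sub_apply, Matrix.one_apply]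
    ring
  have hD2 : (minorMatrix A - 1).det =
      (a*e-b*d-1)*((a*i-c*g-1)*(e*i-f*h-1)-(b*i-c*h)*(d*i-f*g))
      - (a*f-c*d)*((a*h-b*g)*(e*i-f*h-1)-(b*i-c*h)*(d*h-e*g))
      + (b*f-c*e)*((a*h-b*g)*(d*i-f*g)-(a*i-c*g-1)*(d*h-e*g)) := by
    simp [minorMatrix, minor3, Matrix.det_fin_three, Matrix.det_fin_two,
      Fin.succAbove, Fin.lt_def, Matrix.sub_apply, Matrix.one_apply,
      Matrix.submatrix_apply]
    ring
  have hP : a*e*i - a*f*h - b*d*i + b*f*g + c*d*h - c*e*g = 1 ∨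
      a*e*i - a*f*h - b*d*i + b*f*g + c*d*h - c*e*g = -1 := by
    rcases hA with hA | hA <;> [left; right] <;>
      · rw [Matrix.det_fin_three] at hA; linarith [hA]
  have hk : ∃ k : ℤ, (A - 1).det - (minorMatrix A - 1).det = 2 * k := by
    rcases hP with hP | hP
    · refine ⟨(a+e+i) - ((e*i-f*h)+(a*i-c*g)+(a*e-b*d)), ?_⟩
      rw [hD1, hD2]
      linear_combination ((a+e+i) - (a*e*i - a*f*h - b*d*i + b*f*g + c*d*h - c*e*g)) * hP
    · refine ⟨-1 - ((e*i-f*h)+(a*i-c*g)+(a*e-b*d)), ?_⟩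
      rw [hD1, hD2]
      linear_combination ((a+e+i) - (a*e*i - a*f*h - b*d*i + b*f*g + c*d*h - c*e*g) + 2) * hP
  obtain ⟨k, hk⟩ := hk
  constructor
  · omega
  · intro hcon
    rcases Int.even_or_odd (A - 1).det with ⟨u, hu⟩ | ⟨u, hu⟩
    · have h4 : (A - 1).det * (minorMatrix A - 1).det = 4 * (u * (u - k)) := by
        have : (minorMatrix A - 1).det = 2 * (u - k) := by omega
        rw [hu, this]; ring
      omega
    · have h4 : (A - 1).det * (minorMatrix A - 1).det = 2 * (2*u*(u-k) + u + (u - k)) + 1 := by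
        have : (minorMatrix A - 1).det = 2 * (u - k) + 1 := by omega
        rw [hu, this]; ring
      omega
end

section
/- For every n ∈ ℕ, the matrix D = [[n,1,1],[1,1,0],[1,0,0]] satisfies |det(D−E)·det(B_D−E)| = 2n−1, and the matrix F = [[n+1,1,1],[2,1,0],[1,0,0]] satisfies |det(F−E)·det(B_F−E)| = 4n, where B_M denotes the associated minor matrix of M. -/
lemma minorMatrix_of (a b c d e f g h i : ℤ) :
    minorMatrix !![a, b, c; d, e, f; g, h, i] =
      !![a * e - b * d, a * f - c * d, b * f - c * e;
         a * h - b * g, a * i - c * g, b * i - c * h;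
         d * h - e * g, d * i - f * g, e * i - f * h] := by
  simp only [minorMatrix, minor3, Matrix.det_fin_two]
  rfl

lemma det_sub_one_fin_three_of {R : Type*} [CommRing R] (a b c d e f g h i : R) :
    (!![a, b, c; d, e, f; g, h, i] - 1).det =
      (a - 1) * ((e - 1) * (i - 1) - f * h) - b * (d * (i - 1) - f * g)
        + c * (d * h - (e - 1) * g) := by
  rw [Matrix.one_fin_three, Matrix.det_fin_three]
  simp only [Matrix.sub_apply, Matrix.of_apply, Matrix.cons_val', Matrix.cons_val_zero,
    Matrix.cons_val_fin_one, Matrix.cons_val_one, Matrix.cons_val, sub_zero]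
  ring

/-- For every `n ∈ ℕ` (positive), the matrix `D = [[n,1,1],[1,1,0],[1,0,0]]`
satisfies `|det(D - E) * det(B_D - E)| = 2n - 1`, and the matrix
`F = [[n+1,1,1],[2,1,0],[1,0,0]]` satisfies `|det(F - E) * det(B_F - E)| = 4n`,
where `B_M` denotes the associated matrix of minors of `M`. -/
theorem odd_and_multiples_of_four_realized (n : ℕ) (hn : 1 ≤ n) :
    ((((!![(n : ℤ), 1, 1; 1, 1, 0; 1, 0, 0]) - 1).det *
        ((minorMatrix (!![(n : ℤ), 1, 1; 1, 1, 0; 1, 0, 0])) - 1).det).natAbs = 2 * n - 1) ∧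
      ((((!![(n : ℤ) + 1, 1, 1; 2, 1, 0; 1, 0, 0]) - 1).det *
        ((minorMatrix (!![(n : ℤ) + 1, 1, 1; 2, 1, 0; 1, 0, 0])) - 1).det).natAbs = 4 * n) := by
  -- det (D - 1) = 1, det (B_D - 1) = 2n - 1, det (F - 1) = 2, det (B_F - 1) = 2n
  simp only [minorMatrix_of, det_sub_one_fin_three_of]
  omega
end
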